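/- arXiv:2203.05943 — 3 statements merged into one kernel-verified Lean document; each statement's English description precedes it below -/
import Mathlib

section
/- If Q is a finite set of points in R^N in general position (no d+2 points of Q lie on a common (d-1)-dimensional sphere, where d = dim(Aff Q)), then the Delaunay complex Del(Q) is geometrically realized: every Delaunay simplex is non-degenerate, and for any two Delaunay simplices α, β, the convex hull of α ∩ β equals Conv(α) ∩ Conv(β). -/
open Metric Set
open scoped Classical

noncomputable section

abbrev Euc (N : ℕ) := EuclideanSpace ℝ (Fin N)

variable {N : ℕ}

/-- The medial axis of `A`: points with at least two closest points in `A`. -/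
def medialAxis (A : Set (Euc N)) : Set (Euc N) :=
  {x | ∃ a ∈ A, ∃ b ∈ A, a ≠ b ∧ dist x a = infDist x A ∧ dist x b = infDist x A}

/-- `p` is a nearest point of `A` to `x`. -/
def IsNearestPt (A : Set (Euc N)) (x p : Euc N) : Prop :=
  p ∈ A ∧ dist x p = infDist x A

/-- `π` is a nearest-point projection map onto `A`, defined off the medial axis. -/
def IsNearestPtProj (A : Set (Euc N)) (π : Euc N → Euc N) : Prop :=
  ∀ x, x ∉ medialAxis A → IsNearestPt A x (π x)

/-- The angle between two linear subspaces: sup over unit vectors of `V₀` of the inf of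
angles with unit vectors of `V₁`. -/
def subAngle (V₀ V₁ : Submodule ℝ (Euc N)) : ℝ :=
  sSup {a | ∃ v₀ ∈ V₀, ‖v₀‖ = 1 ∧
    a = sInf {b | ∃ v₁ ∈ V₁, ‖v₁‖ = 1 ∧ b = InnerProductGeometry.angle v₀ v₁}}

/-- Angle between two affine subspaces. -/
def affAngle (H₀ H₁ : AffineSubspace ℝ (Euc N)) : ℝ :=
  subAngle H₀.direction H₁.direction

/-- Angle between the line through `u, v` and the affine subspace `H`. -/
def lineAngle (u v : Euc N) (H : AffineSubspace ℝ (Euc N)) : ℝ :=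
  subAngle (Submodule.span ℝ {v - u}) H.direction

/-- Orthogonal projection onto an affine subspace (the identity if `H` is empty). -/
def projA (H : AffineSubspace ℝ (Euc N)) (x : Euc N) : Euc N :=
  if h : (H : Set (Euc N)).Nonempty then
    h.choose + (Submodule.orthogonalProjectionOnto H.direction (x - h.choose) : Euc N)
  else x

/-- The minimal height of a simplex (over all vertices, distance to opposite facet). -/
def height (σ : Finset (Euc N)) : ℝ :=
  sInf ((fun v => infDist v (affineSpan ℝ ((σ.erase v : Finset (Euc N)) : Set (Euc N)))) '' σ)

/-- `σ` is a non-degenerate simplex: its vertices are affinely independent. -/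
def Nondegenerate (σ : Finset (Euc N)) : Prop :=
  AffineIndependent ℝ (fun p : σ => (p : Euc N))

/-- The sphere centered at `z` of radius `r` circumscribes `σ`. -/
def IsCircum (σ : Finset (Euc N)) (z : Euc N) (r : ℝ) : Prop :=
  ∀ p ∈ σ, dist p z = r

/-- `(z, r)` is the smallest circumscribing sphere of `σ`. -/
def IsMinCircum (σ : Finset (Euc N)) (z : Euc N) (r : ℝ) : Prop :=
  IsCircum σ z r ∧ ∀ z' r', IsCircum σ z' r' → r ≤ r'

/-- `(c, r)` is the smallest enclosing ball of `σ`. -/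
def IsSEB (σ : Finset (Euc N)) (c : Euc N) (r : ℝ) : Prop :=
  (∀ p ∈ σ, dist p c ≤ r) ∧ ∀ c' r', (∀ p ∈ σ, dist p c' ≤ r') → r ≤ r'

/-- `σ` is a Delaunay simplex of the point set `Q`: some circumscribing sphere of `σ`
bounds a ball containing no point of `Q` in its interior. -/
def IsDelaunay (Q : Set (Euc N)) (σ : Finset (Euc N)) : Prop :=
  (σ : Set (Euc N)) ⊆ Q ∧ ∃ z r, IsCircum σ z r ∧ ∀ q ∈ Q, r ≤ dist q z

/-- Separation of a point set: infimum of pairwise distances. -/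
def sep (X : Set (Euc N)) : ℝ :=
  sInf {r | ∃ x ∈ X, ∃ y ∈ X, x ≠ y ∧ r = dist x y}

/-- A relation is a multiplicative `M`-distortion. -/
def MulDistortion (R : Set (Euc N × Euc N)) (M : ℝ) : Prop :=
  ∀ p ∈ R, ∀ q ∈ R,
    (1 / (1 + M)) * dist p.1 q.1 ≤ dist p.2 q.2 ∧ dist p.2 q.2 ≤ (1 + M) * dist p.1 q.1

/-- A relation is an additive `A`-distortion. -/
def AddDistortion (R : Set (Euc N × Euc N)) (A : ℝ) : Prop :=
  ∀ p ∈ R, ∀ q ∈ R, |dist p.2 q.2 - dist p.1 q.1| ≤ A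

/-- A relation is one-to-one: injective and functional. -/
def OneToOneRel (R : Set (Euc N × Euc N)) : Prop :=
  (∀ p ∈ R, ∀ q ∈ R, p.2 = q.2 → p.1 = q.1) ∧ (∀ p ∈ R, ∀ q ∈ R, p.1 = q.1 → p.2 = q.2)

/-- `M` is a `C²` `d`-dimensional submanifold of `ℝᴺ` with tangent spaces given by `T`. -/
def IsC2Submanifold (d : ℕ) (M : Set (Euc N)) (T : Euc N → Submodule ℝ (Euc N)) : Prop :=
  ∀ m ∈ M, ∃ (φ : EuclideanSpace ℝ (Fin d) → Euc N) (U : Set (Euc N)),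
    IsOpen U ∧ m ∈ U ∧ ContDiff ℝ 2 φ ∧ Function.Injective φ ∧
    (∀ x, Function.Injective (fderiv ℝ φ x)) ∧
    Set.range φ = M ∩ U ∧
    ∀ x, T (φ x) = LinearMap.range ((fderiv ℝ φ x).toLinearMap)

/-- The family of affine spaces associated to a simplex `σ`: the affine hull of `σ`
together with the tangent spaces at projections of points of `Conv σ` onto `M`. -/
def stdFamily (σ : Finset (Euc N)) (T : Euc N → Submodule ℝ (Euc N)) (πM : Euc N → Euc N) :
    Set (AffineSubspace ℝ (Euc N)) :=
  insert (affineSpan ℝ (σ : Set (Euc N)))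
    ((fun x => AffineSubspace.mk' (πM x) (T (πM x))) '' convexHull ℝ (σ : Set (Euc N)))

end

/-!
A cospherical, affinely dependent subset of `Q` can be enlarged one point at a time, each new
point lying off the current affine hull: sliding the center of the sphere orthogonally to that
hull puts the new point on the sphere, and the excess `#T - dim T ≥ 2` is kept. Once the hull is
`Aff Q` this produces `d + 2` cospherical points of `Q`, so cospherical subsets of `Q` are affinely
independent.

For two Delaunay simplices, the radical hyperplane of their empty spheres weakly separates them,
so a common point of their hulls lies in the hulls of the vertices on that hyperplane. These
vertices lie on both spheres, hence form an affinely independent set, and two simplices whose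
union of vertices is affinely independent meet in the hull of their common vertices.
-/

open EuclideanGeometry Module
open scoped RealInnerProductSpace

section Separation

variable {𝕜 E : Type*} [Field 𝕜] [LinearOrder 𝕜] [IsStrictOrderedRing 𝕜] [AddCommGroup E]
  [Module 𝕜 E]

theorem mem_convexHull_filter_of_le {s : Finset E} {ℓ : E →ₗ[𝕜] 𝕜} {c : 𝕜}
    (hs : ∀ p ∈ s, ℓ p ≤ c) {x : E} (hx : x ∈ convexHull 𝕜 (s : Set E)) (hxc : ℓ x = c) :
    x ∈ convexHull 𝕜 (s.filter (ℓ · = c) : Set E) := by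
  obtain ⟨w, hw₀, hw₁, rfl⟩ := Finset.mem_convexHull'.1 hx
  have hsum : ∑ p ∈ s, w p * (c - ℓ p) = 0 := by
    simp only [mul_sub, Finset.sum_sub_distrib, ← Finset.sum_mul, hw₁, one_mul, ← hxc,
      map_sum, map_smul, smul_eq_mul, sub_self]
  have hw : ∀ p ∈ s, w p ≠ 0 → ℓ p = c := fun p hp hwp => by
    have := (Finset.sum_eq_zero_iff_of_nonneg fun p hp =>
      mul_nonneg (hw₀ p hp) (sub_nonneg.2 (hs p hp))).1 hsum p hp
    linarith [(mul_eq_zero.1 this).resolve_left hwp]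
  refine Finset.mem_convexHull'.2 ⟨w, fun p hp => hw₀ p (Finset.mem_filter.1 hp).1, ?_, ?_⟩
  · rw [Finset.sum_filter_of_ne hw, hw₁]
  · exact Finset.sum_filter_of_ne fun p hp h => hw p hp (left_ne_zero_of_smul h)

theorem convexHull_inter_subset_filter_of_separates {s t : Finset E} {ℓ : E →ₗ[𝕜] 𝕜} {c : 𝕜}
    (hs : ∀ p ∈ s, ℓ p ≤ c) (ht : ∀ q ∈ t, c ≤ ℓ q) :
    convexHull 𝕜 (s : Set E) ∩ convexHull 𝕜 (t : Set E) ⊆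
      convexHull 𝕜 (s.filter (ℓ · = c) : Set E) ∩ convexHull 𝕜 (t.filter (ℓ · = c) : Set E) := by
  rintro x ⟨hxs, hxt⟩
  have hxc : ℓ x = c := le_antisymm
    (convexHull_min (fun p hp => hs p hp) (convex_halfSpace_le ℓ.isLinear c) hxs)
    (convexHull_min (fun q hq => ht q hq) (convex_halfSpace_ge ℓ.isLinear c) hxt)
  refine ⟨mem_convexHull_filter_of_le hs hxs hxc, ?_⟩
  have := mem_convexHull_filter_of_le (ℓ := -ℓ) (c := -c) (fun q hq => by simpa using ht q hq)
    hxt (by simp [hxc])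
  simpa only [LinearMap.neg_apply, neg_inj] using this

end Separation

section Cospherical

variable {E : Type*} [NormedAddCommGroup E] [InnerProductSpace ℝ E]

lemma dist_add_smul_sq (p z v : E) (t : ℝ) :
    dist p (z + t • v) ^ 2 = dist p z ^ 2 - 2 * t * ⟪p - z, v⟫ + t ^ 2 * ‖v‖ ^ 2 := by
  rw [dist_eq_norm, dist_eq_norm, show p - (z + t • v) = (p - z) - t • v by abel,
    norm_sub_sq_real, real_inner_smul_right, norm_smul, mul_pow, Real.norm_eq_abs, sq_abs]
  ring

theorem EuclideanGeometry.Cospherical.insert_of_notMem_affineSpan {s : Set E}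
    [(vectorSpan ℝ s).HasOrthogonalProjection] (hs : Cospherical s) {q : E}
    (hq : q ∉ affineSpan ℝ s) : Cospherical (insert q s) := by
  rcases s.eq_empty_or_nonempty with rfl | ⟨p₀, hp₀⟩
  · simpa using cospherical_singleton q
  obtain ⟨z, r, hzr⟩ := hs
  have hp₀s : p₀ ∈ affineSpan ℝ s := subset_affineSpan ℝ s hp₀
  obtain ⟨v, hv, hqv⟩ : ∃ v ∈ (vectorSpan ℝ s)ᗮ, ⟪q - p₀, v⟫ ≠ 0 := by
    have hq' : q - p₀ ∉ (vectorSpan ℝ s)ᗮᗮ := by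
      rwa [Submodule.orthogonal_orthogonal, ← direction_affineSpan, ← vsub_eq_sub,
        AffineSubspace.vsub_right_mem_direction_iff_mem hp₀s]
    rw [Submodule.mem_orthogonal] at hq'
    push Not at hq'
    obtain ⟨v, hv, hqv⟩ := hq'
    exact ⟨v, hv, by rwa [real_inner_comm]⟩
  have hperp : ∀ p ∈ s, ⟪p - z, v⟫ = ⟪p₀ - z, v⟫ := fun p hp => by
    have h := (Submodule.mem_orthogonal' _ v).1 hv (p - p₀)
      (by rw [← vsub_eq_sub]; exact vsub_mem_vectorSpan ℝ hp hp₀)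
    rw [real_inner_comm] at h
    rw [show p - z = (p - p₀) + (p₀ - z) by abel, inner_add_left, h, zero_add]
  set t := (dist q z ^ 2 - r ^ 2) / (2 * ⟪q - p₀, v⟫)
  have ht : 2 * t * ⟪q - p₀, v⟫ = dist q z ^ 2 - r ^ 2 := by
    simp only [t]; field_simp
  refine ⟨z + t • v, dist p₀ (z + t • v), fun p hp => ?_⟩
  rw [← sq_eq_sq₀ dist_nonneg dist_nonneg, dist_add_smul_sq, dist_add_smul_sq, hzr p₀ hp₀]
  rcases hp with rfl | hp
  · have : ⟪p - z, v⟫ = ⟪p - p₀, v⟫ + ⟪p₀ - z, v⟫ := by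
      rw [← inner_add_left]; congr 1; abel
    linear_combination -ht - 2 * t * this
  · rw [hzr p hp, hperp p hp]

theorem exists_cospherical_superset_affineSpan_eq {T Q : Finset E} (hTQ : T ⊆ Q)
    (hT : Cospherical (T : Set E)) :
    ∃ S, T ⊆ S ∧ S ⊆ Q ∧ Cospherical (S : Set E) ∧
      affineSpan ℝ (S : Set E) = affineSpan ℝ (Q : Set E) ∧
      finrank ℝ (vectorSpan ℝ (S : Set E)) + T.card ≤
        finrank ℝ (vectorSpan ℝ (T : Set E)) + S.card := by
  set C := Q.powerset.filter fun S => T ⊆ S ∧ Cospherical (S : Set E) ∧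
    finrank ℝ (vectorSpan ℝ (S : Set E)) + T.card ≤ finrank ℝ (vectorSpan ℝ (T : Set E)) + S.card
  obtain ⟨S, hSC, hmax⟩ := C.exists_max_image Finset.card
    ⟨T, Finset.mem_filter.2 ⟨Finset.mem_powerset.2 hTQ, subset_rfl, hT, le_rfl⟩⟩
  obtain ⟨hSQ, hTS, hS, hrank⟩ := by
    simpa only [C, Finset.mem_filter, Finset.mem_powerset] using hSC
  refine ⟨S, hTS, hSQ, hS, le_antisymm (affineSpan_mono ℝ (by exact_mod_cast hSQ))
    (affineSpan_le.2 fun q hq => ?_), hrank⟩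
  by_contra hqS
  have : FiniteDimensional ℝ (vectorSpan ℝ (S : Set E)) :=
    finiteDimensional_vectorSpan_of_finite ℝ S.finite_toSet
  have hqS' : q ∉ S := fun h => hqS (subset_affineSpan ℝ _ (by exact_mod_cast h))
  have hins : insert q S ∈ C := by
    simp only [C, Finset.mem_filter, Finset.mem_powerset, Finset.coe_insert]
    refine ⟨Finset.insert_subset hq hSQ, hTS.trans (Finset.subset_insert q S),
      hS.insert_of_notMem_affineSpan hqS, ?_⟩
    rw [Finset.card_insert_of_notMem hqS']
    have := finrank_vectorSpan_insert_le_set ℝ (S : Set E) q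
    rw [← Finset.coe_insert] at this
    omega
  have := hmax _ hins
  rw [Finset.card_insert_of_notMem hqS'] at this
  omega

theorem finrank_vectorSpan_add_two_le_card {T : Finset E}
    (hT : ¬ AffineIndependent ℝ ((↑) : T → E)) :
    finrank ℝ (vectorSpan ℝ (T : Set E)) + 2 ≤ T.card := by
  have hcard : 2 ≤ T.card := by
    by_contra! h
    have := Finset.card_le_one_iff_subsingleton_coe.1 (Nat.le_of_lt_succ h)
    exact hT (affineIndependent_of_subsingleton ℝ _)
  rw [affineIndependent_iff_le_finrank_vectorSpan ℝ _ (n := T.card - 1)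
    (by rw [Fintype.card_coe]; omega)] at hT
  have hr : finrank ℝ (vectorSpan ℝ (Set.range ((↑) : T → E))) =
      finrank ℝ (vectorSpan ℝ (T : Set E)) :=
    (LinearEquiv.ofEq _ _ (by rw [Subtype.range_coe])).finrank_eq
  omega

def CosphericalGeneralPosition (Q : Finset E) : Prop :=
  ∀ S ⊆ Q, S.card = finrank ℝ (affineSpan ℝ (Q : Set E)).direction + 2 → ¬ Cospherical (S : Set E)

theorem CosphericalGeneralPosition.affineIndependent_of_subset {Q T : Finset E}
    (hQ : CosphericalGeneralPosition Q) (hTQ : T ⊆ Q) (hT : Cospherical (T : Set E)) :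
    AffineIndependent ℝ ((↑) : T → E) := by
  by_contra hdep
  obtain ⟨S, hTS, hSQ, hS, hspan, hrank⟩ := exists_cospherical_superset_affineSpan_eq hTQ hT
  have hdim : finrank ℝ (affineSpan ℝ (Q : Set E)).direction + 2 ≤ S.card := by
    rw [← hspan, direction_affineSpan]
    linarith [finrank_vectorSpan_add_two_le_card hdep]
  obtain ⟨S', hS'S, hS'card⟩ := Finset.exists_subset_card_eq hdim
  exact hQ S' (hS'S.trans hSQ) hS'card (hS.subset (by exact_mod_cast hS'S))

theorem exists_radical_hyperplane (z₁ z₂ : E) (r₁ r₂ : ℝ) :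
    ∃ (ℓ : E →ₗ[ℝ] ℝ) (c : ℝ), ∀ y,
      2 * (ℓ y - c) = (dist y z₁ ^ 2 - r₁ ^ 2) - (dist y z₂ ^ 2 - r₂ ^ 2) := by
  refine ⟨(innerSL ℝ (z₂ - z₁)).toLinearMap, (‖z₂‖ ^ 2 - ‖z₁‖ ^ 2 + r₁ ^ 2 - r₂ ^ 2) / 2,
    fun y => ?_⟩
  simp only [ContinuousLinearMap.coe_coe, innerSL_apply_apply, dist_eq_norm, norm_sub_sq_real,
    inner_sub_left, real_inner_comm _ y]
  ring

theorem convexHull_inter_subset_of_forall_le_dist {α β : Finset E} {z₁ z₂ : E} {r₁ r₂ : ℝ}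
    (hr₁ : 0 ≤ r₁) (hr₂ : 0 ≤ r₂)
    (hα : ∀ p ∈ α, dist p z₁ = r₁) (hβ : ∀ q ∈ β, dist q z₂ = r₂)
    (hαβ : ∀ p ∈ α, r₂ ≤ dist p z₂) (hβα : ∀ q ∈ β, r₁ ≤ dist q z₁) :
    convexHull ℝ (α : Set E) ∩ convexHull ℝ (β : Set E) ⊆
      convexHull ℝ (α.filter (dist · z₂ = r₂) : Set E) ∩
        convexHull ℝ (β.filter (dist · z₁ = r₁) : Set E) := by
  obtain ⟨ℓ, c, hℓ⟩ := exists_radical_hyperplane z₁ z₂ r₁ r₂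
  have hα' : ∀ p ∈ α, 2 * (ℓ p - c) = -(dist p z₂ ^ 2 - r₂ ^ 2) := fun p hp => by
    rw [hℓ, hα p hp]; ring
  have hβ' : ∀ q ∈ β, 2 * (ℓ q - c) = dist q z₁ ^ 2 - r₁ ^ 2 := fun q hq => by
    rw [hℓ, hβ q hq]; ring
  refine (convexHull_inter_subset_filter_of_separates (ℓ := ℓ) (c := c) (fun p hp => ?_)
    (fun q hq => ?_)).trans (Set.inter_subset_inter (convexHull_mono ?_) (convexHull_mono ?_))
  · nlinarith [hα' p hp, hαβ p hp]
  · nlinarith [hβ' q hq, hβα q hq]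
  · intro p
    simp only [Finset.coe_filter, Set.mem_ofPred_eq, and_imp]
    intro hp hpc
    refine ⟨hp, (sq_eq_sq₀ dist_nonneg hr₂).1 ?_⟩
    linarith [hα' p hp]
  · intro q
    simp only [Finset.coe_filter, Set.mem_ofPred_eq, and_imp]
    intro hq hqc
    refine ⟨hq, (sq_eq_sq₀ dist_nonneg hr₁).1 ?_⟩
    linarith [hβ' q hq]

end Cospherical

theorem IsDelaunay.exists_radius_nonneg {N : ℕ} {Q : Set (Euc N)} {σ : Finset (Euc N)}
    (h : IsDelaunay Q σ) : ∃ z r, 0 ≤ r ∧ IsCircum σ z r ∧ ∀ q ∈ Q, r ≤ dist q z := by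
  obtain ⟨-, z, r, hcirc, hempty⟩ := h
  refine ⟨z, max r 0, le_max_right r 0, fun p hp => ?_,
    fun q hq => max_le (hempty q hq) dist_nonneg⟩
  rw [hcirc p hp, max_eq_left (hcirc p hp ▸ dist_nonneg)]

theorem IsDelaunay.convexHull_inter {N : ℕ} {Q : Finset (Euc N)}
    (hQ : CosphericalGeneralPosition Q)
    {α β : Finset (Euc N)} (hα : IsDelaunay (Q : Set (Euc N)) α)
    (hβ : IsDelaunay (Q : Set (Euc N)) β) :
    convexHull ℝ ((α ∩ β : Finset (Euc N)) : Set (Euc N)) =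
      convexHull ℝ (α : Set (Euc N)) ∩ convexHull ℝ (β : Set (Euc N)) := by
  have hαQ : α ⊆ Q := Finset.coe_subset.1 hα.1
  have hβQ : β ⊆ Q := Finset.coe_subset.1 hβ.1
  obtain ⟨z₁, r₁, hr₁, hα₁, hQ₁⟩ := hα.exists_radius_nonneg
  obtain ⟨z₂, r₂, hr₂, hβ₂, hQ₂⟩ := hβ.exists_radius_nonneg
  refine (Set.subset_inter (convexHull_mono (by simp)) (convexHull_mono (by simp))).antisymm ?_
  refine (convexHull_inter_subset_of_forall_le_dist hr₁ hr₂ hα₁ hβ₂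
    (fun p hp => hQ₂ p (hα.1 hp)) (fun q hq => hQ₁ q (hβ.1 hq))).trans ?_
  set A := α.filter (dist · z₂ = r₂)
  set B := β.filter (dist · z₁ = r₁)
  have hAB : AffineIndependent ℝ ((↑) : ↑(A ∪ B) → Euc N) :=
    hQ.affineIndependent_of_subset
      (Finset.union_subset ((Finset.filter_subset _ _).trans hαQ)
        ((Finset.filter_subset _ _).trans hβQ))
      ⟨z₁, r₁, fun p hp => by
        rcases Finset.mem_union.1 (Finset.mem_coe.1 hp) with hp | hp
        · exact hα₁ p (Finset.mem_filter.1 hp).1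
        · exact (Finset.mem_filter.1 hp).2⟩
  rw [← hAB.convexHull_inter']
  refine convexHull_mono ?_
  rw [← Finset.coe_inter]
  exact Finset.coe_subset.2
    (Finset.inter_subset_inter (Finset.filter_subset _ _) (Finset.filter_subset _ _))

theorem delaunay_general_position_realized (N : ℕ) (Q : Finset (Euc N))
    (hgen : ∀ S : Finset (Euc N), S ⊆ Q →
      S.card = Module.finrank ℝ (affineSpan ℝ (Q : Set (Euc N))).direction + 2 →
      ¬ ∃ (z : Euc N) (r : ℝ), z ∈ affineSpan ℝ (Q : Set (Euc N)) ∧ ∀ p ∈ S, dist p z = r) :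
    (∀ σ : Finset (Euc N), IsDelaunay (Q : Set (Euc N)) σ → Nondegenerate σ) ∧
    (∀ α β : Finset (Euc N), IsDelaunay (Q : Set (Euc N)) α → IsDelaunay (Q : Set (Euc N)) β →
      convexHull ℝ ((α ∩ β : Finset (Euc N)) : Set (Euc N)) =
        convexHull ℝ (α : Set (Euc N)) ∩ convexHull ℝ (β : Set (Euc N))) := by
  have hQ : CosphericalGeneralPosition Q := by
    intro S hSQ hcard hS
    obtain ⟨p, hp⟩ : S.Nonempty := Finset.card_pos.1 (by omega)
    have : Nonempty (affineSpan ℝ (Q : Set (Euc N))) :=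
      ⟨⟨p, subset_affineSpan ℝ _ (Finset.mem_coe.2 (hSQ hp))⟩⟩
    obtain ⟨z, hz, r, hzr⟩ := (cospherical_iff_exists_mem_of_finiteDimensional
      ((Finset.coe_subset.2 hSQ).trans (subset_affineSpan ℝ _))).1 hS
    exact hgen S hSQ hcard ⟨z, r, hz, hzr⟩
  refine ⟨fun σ ⟨hσQ, z, r, hcirc, _⟩ => ?_, fun α β hα hβ => hα.convexHull_inter hQ hβ⟩
  exact hQ.affineIndependent_of_subset (Finset.coe_subset.1 hσQ) ⟨z, r, hcirc⟩
end

section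
/- Let X ⊆ R^N be a d-dimensional affine space, σ ⊆ X a non-degenerate d-simplex, and x ∈ X such that |‖x−a‖² − ‖x−a'‖²| ≤ ξ² for all vertices a, a' of σ. Then the circumcenter Z(σ) of σ satisfies ‖Z(σ) − x‖ ≤ d·ξ²/(2·height(σ)). -/
open Metric Set
open scoped Classical

/-!
Put `w = z - x`; it lies in the direction of the affine hull of `σ`. Since `z` is equidistant
from the vertices, `‖x - a‖² - ‖x - a'‖² = 2⟪w, a - a'⟫`, so the hypothesis bounds every
`|⟪w, a - a'⟫|` by `ξ² / 2`. With a vertex `a₀` fixed, the altitude vectors of the other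
vertices, divided by the squares of their lengths, form the basis dual to the edges `a - a₀`.
Expanding `w` in the edges and pairing with `w` gives
`‖w‖² ≤ d · (‖w‖ / height σ) · ξ² / 2`.
-/

open scoped RealInnerProductSpace
open EuclideanGeometry

section

variable {V P : Type*} [NormedAddCommGroup V] [InnerProductSpace ℝ V] [MetricSpace P]
  [NormedAddTorsor V P]

theorem dist_sq_sub_dist_sq_eq_two_inner_of_dist_eq {a a' z : P} (h : dist a z = dist a' z)
    (x : P) : dist x a ^ 2 - dist x a' ^ 2 = 2 * ⟪z -ᵥ x, a -ᵥ a'⟫ := by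
  have hsq (b : P) : dist x b ^ 2 = dist b z ^ 2 + 2 * ⟪z -ᵥ x, b -ᵥ z⟫ + dist z x ^ 2 := by
    rw [dist_comm x, dist_eq_norm_vsub V b, dist_eq_norm_vsub V b, dist_eq_norm_vsub V z,
      ← vsub_add_vsub_cancel b z x, norm_add_sq_real, real_inner_comm]
  rw [hsq, hsq, h, ← vsub_sub_vsub_cancel_right a a' z, inner_sub_right]
  ring

theorem AffineIndependent.exists_simplex_range_eq {n : ℕ} {σ : Finset P}
    (hσ : AffineIndependent ℝ ((↑) : σ → P)) (hcard : σ.card = n + 1) :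
    ∃ s : Affine.Simplex ℝ P n, range s.points = σ := by
  let e : σ ≃ Fin (n + 1) := Fintype.equivFinOfCardEq (by rw [Fintype.card_coe, hcard])
  refine ⟨⟨fun i => e.symm i, hσ.comp_embedding e.symm.toEmbedding⟩, ?_⟩
  change range (Subtype.val ∘ e.symm) = σ
  rw [range_comp, e.symm.range_eq_univ, image_univ, Subtype.range_coe]

namespace Affine.Simplex

variable {n : ℕ} [NeZero n] (s : Simplex ℝ P n)

theorem height_eq_infDist (i : Fin (n + 1)) :
    s.height i = infDist (s.points i) (affineSpan ℝ (s.points '' {i}ᶜ)) := by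
  rw [height, altitudeFoot, orthogonalProjectionSpan, dist_orthogonalProjection_eq_infDist,
    range_faceOpposite_points]

theorem iInf_height_pos : 0 < ⨅ i, s.height i := by
  obtain ⟨i, hi⟩ := exists_eq_ciInf_of_finite (f := s.height)
  exact hi ▸ s.height_pos i

theorem inner_vsub_vsub_altitudeFoot_eq_ite {i j : Fin (n + 1)} (hij : i ≠ j) (k : Fin (n + 1)) :
    ⟪s.points k -ᵥ s.points j, s.points i -ᵥ s.altitudeFoot i⟫ =
      if k = i then s.height i ^ 2 else 0 := by
  split_ifs with hk
  · rw [hk]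
    exact s.inner_vsub_vsub_altitudeFoot_eq_height_sq hij
  · rw [← vsub_sub_vsub_cancel_right _ _ (s.altitudeFoot i), inner_sub_left,
      s.inner_vsub_altitudeFoot_vsub_altitudeFoot_eq_zero (Ne.symm hk),
      s.inner_vsub_altitudeFoot_vsub_altitudeFoot_eq_zero hij, sub_zero]

theorem eq_sum_inner_vsub_altitudeFoot_smul {u : V} (hu : u ∈ vectorSpan ℝ (range s.points))
    (j : Fin (n + 1)) :
    u = ∑ i, (⟪u, s.points i -ᵥ s.altitudeFoot i⟫ / s.height i ^ 2) •
      (s.points i -ᵥ s.points j) := by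
  rw [vectorSpan_range_eq_span_range_vsub_right ℝ _ j] at hu
  obtain ⟨c, rfl⟩ := (Submodule.mem_span_range_iff_exists_fun ℝ).1 hu
  refine Finset.sum_congr rfl fun i _ => ?_
  rcases eq_or_ne i j with rfl | hij
  · simp
  · have hh := (s.height_pos i).ne'
    simp only [sum_inner, real_inner_smul_left, s.inner_vsub_vsub_altitudeFoot_eq_ite hij,
      mul_ite, mul_zero, Finset.sum_ite_eq', Finset.mem_univ, if_true]
    field_simp

theorem norm_le_of_abs_inner_vsub_le {u : V} (hu : u ∈ vectorSpan ℝ (range s.points)) {c : ℝ}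
    (hc : ∀ i j, |⟪u, s.points i -ᵥ s.points j⟫| ≤ c) : ‖u‖ ≤ n * c / ⨅ i, s.height i := by
  set h := ⨅ i, s.height i
  have hh : 0 < h := s.iInf_height_pos
  have hc0 : 0 ≤ c := by simpa using hc 0 0
  have hterm (i : Fin (n + 1)) :
      ⟪u, s.points i -ᵥ s.altitudeFoot i⟫ / s.height i ^ 2 * ⟪u, s.points i -ᵥ s.points 0⟫ ≤
        ‖u‖ * c / h := by
    have hi := s.height_pos i
    have halt : ‖s.points i -ᵥ s.altitudeFoot i‖ = s.height i := (dist_eq_norm_vsub V _ _).symm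
    calc _ ≤ |⟪u, s.points i -ᵥ s.altitudeFoot i⟫| / s.height i ^ 2 *
            |⟪u, s.points i -ᵥ s.points 0⟫| := by
          refine (le_abs_self _).trans_eq ?_
          rw [abs_mul, abs_div, abs_of_pos (pow_pos hi 2)]
      _ ≤ ‖u‖ * s.height i / s.height i ^ 2 * c := by
          gcongr
          · exact halt ▸ abs_real_inner_le_norm _ _
          · exact hc i 0
      _ = ‖u‖ * c / s.height i := by field_simp
      _ ≤ ‖u‖ * c / h := by gcongr; exact ciInf_le (finite_range _).bddBelow i
  have hsq : ‖u‖ ^ 2 ≤ ‖u‖ * (n * c / h) := by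
    calc ‖u‖ ^ 2 = ⟪u, u⟫ := (real_inner_self_eq_norm_sq u).symm
      _ = ∑ i, ⟪u, s.points i -ᵥ s.altitudeFoot i⟫ / s.height i ^ 2 *
            ⟪u, s.points i -ᵥ s.points 0⟫ := by
          nth_rw 2 [s.eq_sum_inner_vsub_altitudeFoot_smul hu 0]
          simp only [inner_sum, real_inner_smul_right]
      _ = ∑ i : Fin n, ⟪u, s.points i.succ -ᵥ s.altitudeFoot i.succ⟫ / s.height i.succ ^ 2 *
            ⟪u, s.points i.succ -ᵥ s.points 0⟫ := by
          simp [Fin.sum_univ_succ]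
      _ ≤ n * (‖u‖ * c / h) := by
          simpa using Finset.sum_le_sum fun (i : Fin n) (_ : i ∈ Finset.univ) => hterm i.succ
      _ = ‖u‖ * (n * c / h) := by ring
  have hK : 0 ≤ n * c / h := by positivity
  nlinarith [norm_nonneg u]

theorem dist_le_of_abs_dist_sq_sub_dist_sq_le {x z : P} (hx : x ∈ affineSpan ℝ (range s.points))
    (hz : z ∈ affineSpan ℝ (range s.points)) {r : ℝ} (hr : ∀ i, dist (s.points i) z = r) {ξ : ℝ}
    (hξ : ∀ i j, |dist x (s.points i) ^ 2 - dist x (s.points j) ^ 2| ≤ ξ ^ 2) :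
    dist z x ≤ n * ξ ^ 2 / (2 * ⨅ i, s.height i) := by
  have hzx : z -ᵥ x ∈ vectorSpan ℝ (range s.points) := by
    rw [← direction_affineSpan]
    exact AffineSubspace.vsub_mem_direction hz hx
  have hinner (i j : Fin (n + 1)) : |⟪z -ᵥ x, s.points i -ᵥ s.points j⟫| ≤ ξ ^ 2 / 2 := by
    have := hξ i j
    rw [dist_sq_sub_dist_sq_eq_two_inner_of_dist_eq ((hr i).trans (hr j).symm), abs_mul,
      abs_two] at this
    linarith
  rw [dist_eq_norm_vsub V]
  convert s.norm_le_of_abs_inner_vsub_le hzx hinner using 1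
  ring

end Affine.Simplex

end

theorem height_eq_iInf_height {N n : ℕ} [NeZero n] {σ : Finset (Euc N)}
    {s : Affine.Simplex ℝ (Euc N) n} (hs : range s.points = σ) :
    height σ = ⨅ i, s.height i := by
  have hface (i : Fin (n + 1)) :
      s.points '' {i}ᶜ = ((σ.erase (s.points i) : Finset (Euc N)) : Set (Euc N)) := by
    rw [image_compl_eq_range_sdiff_image s.independent.injective, image_singleton, hs,
      Finset.coe_erase]
  rw [height, ← hs, ← range_comp]
  congr 2
  funext i
  rw [Function.comp_apply, s.height_eq_infDist, hface]

theorem almost_circumcenter_location (N d : ℕ) (X : AffineSubspace ℝ (Euc N))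
    (hX : Module.finrank ℝ X.direction = d)
    (σ : Finset (Euc N)) (hσX : (σ : Set (Euc N)) ⊆ (X : Set (Euc N)))
    (hσ : Nondegenerate σ) (hcard : σ.card = d + 1)
    (x : Euc N) (hx : x ∈ X) (ξ : ℝ)
    (hxi : ∀ a ∈ σ, ∀ a' ∈ σ, |dist x a ^ 2 - dist x a' ^ 2| ≤ ξ ^ 2)
    (z : Euc N) (r : ℝ) (hz : z ∈ affineSpan ℝ (σ : Set (Euc N))) (hzr : IsCircum σ z r) :
    dist z x ≤ d * ξ ^ 2 / (2 * height σ) := by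
  obtain ⟨s, hs⟩ := hσ.exists_simplex_range_eq hcard
  have hvertex (i : Fin (d + 1)) : s.points i ∈ σ := by
    rw [← Finset.mem_coe, ← hs]
    exact mem_range_self i
  have hspan : affineSpan ℝ (range s.points) = X :=
    s.independent.affineSpan_eq_of_le_of_card_eq_finrank_add_one (hs ▸ affineSpan_le.2 hσX)
      (by simp [hX])
  rw [← hspan] at hx
  rw [← hs] at hz
  rcases Nat.eq_zero_or_pos d with rfl | hd
  · obtain ⟨a, ha⟩ := Finset.card_eq_one.1 hcard
    rw [hs, ha, Finset.coe_singleton, AffineSubspace.mem_affineSpan_singleton] at hx hz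
    simp [hx, hz]
  · have : NeZero d := ⟨hd.ne'⟩
    rw [height_eq_iInf_height hs]
    exact s.dist_le_of_abs_dist_sq_sub_dist_sq_le hx hz (fun i => hzr _ (hvertex i))
      (fun i j => hxi _ (hvertex i) _ (hvertex j))
end

section
/- Let σ ⊆ R^N be a d-simplex and H a d-dimensional affine space with ∠(Aff σ, H) < π/2. Then the radius r_σ of the smallest enclosing ball of σ satisfies r_σ ≤ r_{π_H(σ)} / cos ∠(Aff σ, H), where r_{π_H(σ)} is the radius of the smallest enclosing ball of the projected simplex π_H(σ). -/
open Metric Set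
open scoped Classical

/-!
Let `V₀`, `V₁` be the directions of `Aff σ` and `H` and `θ` their angle. Every unit vector `u`
of `V₀` makes an angle at least `arccos ‖π_{V₁} u‖` with every unit vector of `V₁`, so
`θ ≥ arccos ‖π_{V₁} u‖`, i.e. `π_{V₁}` shrinks vectors of `V₀` by at most the factor `cos θ`.
Since `cos θ > 0` and both spaces have dimension `d`, `π_{V₁}` maps `V₀` onto `V₁`, so the
centre `c'` of the projected ball has, after projecting it onto `H`, a preimage `z ∈ Aff σ`.
Then `cos θ · |p - z| ≤ |π_H p - π_H c'| ≤ |π_H p - c'| ≤ r'` for every vertex `p`.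
-/

open Real InnerProductGeometry Module
open scoped RealInnerProductSpace

section Angles

variable {E : Type*} [NormedAddCommGroup E] [InnerProductSpace ℝ E]

lemma arccos_norm_starProjection_le_angle {V : Submodule ℝ E} [V.HasOrthogonalProjection]
    {u v : E} (hu : ‖u‖ = 1) (hv : v ∈ V) (hv1 : ‖v‖ = 1) :
    arccos ‖V.starProjection u‖ ≤ angle u v := by
  rw [angle, hu, hv1, one_mul, div_one]
  apply arccos_le_arccos
  calc ⟪u, v⟫ = ⟪V.starProjection u, v⟫ := by
        rw [Submodule.inner_starProjection_left_eq_right, Submodule.starProjection_eq_self_iff.2 hv]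
    _ ≤ ‖V.starProjection u‖ * ‖v‖ := real_inner_le_norm _ _
    _ = ‖V.starProjection u‖ := by rw [hv1, mul_one]

end Angles

section SubAngle

variable {N : ℕ} {V₀ V₁ : Submodule ℝ (Euc N)}

lemma sInf_angle_mem_Icc (v₀ : Euc N) (V₁ : Submodule ℝ (Euc N)) :
    sInf {b | ∃ v₁ ∈ V₁, ‖v₁‖ = 1 ∧ b = angle v₀ v₁} ∈ Icc 0 π := by
  set S := {b | ∃ v₁ ∈ V₁, ‖v₁‖ = 1 ∧ b = angle v₀ v₁}
  have hS : ∀ b ∈ S, b ∈ Icc 0 π := by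
    rintro b ⟨v₁, -, -, rfl⟩
    exact ⟨angle_nonneg _ _, angle_le_pi _ _⟩
  refine ⟨Real.sInf_nonneg fun b hb ↦ (hS b hb).1, ?_⟩
  rcases S.eq_empty_or_nonempty with h | ⟨b, hb⟩
  · rw [h, Real.sInf_empty]
    exact pi_pos.le
  · exact (csInf_le ⟨0, fun b hb ↦ (hS b hb).1⟩ hb).trans (hS b hb).2

lemma subAngle_mem_Icc (V₀ V₁ : Submodule ℝ (Euc N)) : subAngle V₀ V₁ ∈ Icc 0 π := by
  refine ⟨Real.sSup_nonneg ?_, Real.sSup_le ?_ pi_pos.le⟩ <;>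
  · rintro a ⟨v₀, -, -, rfl⟩
    simp only [(sInf_angle_mem_Icc v₀ V₁).1, (sInf_angle_mem_Icc v₀ V₁).2]

lemma cos_subAngle_pos (h : subAngle V₀ V₁ < π / 2) : 0 < cos (subAngle V₀ V₁) :=
  cos_pos_of_mem_Ioo ⟨by linarith [(subAngle_mem_Icc V₀ V₁).1, pi_pos], h⟩

lemma arccos_norm_starProjection_le_subAngle (hV₁ : V₁ ≠ ⊥) {u : Euc N} (hu : u ∈ V₀)
    (hu1 : ‖u‖ = 1) : arccos ‖V₁.starProjection u‖ ≤ subAngle V₀ V₁ := by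
  have := Submodule.nontrivial_iff_ne_bot.2 hV₁
  obtain ⟨e, he1⟩ := exists_norm_eq V₁ zero_le_one
  have hbdd : BddAbove {a | ∃ v₀ ∈ V₀, ‖v₀‖ = 1 ∧
      a = sInf {b | ∃ v₁ ∈ V₁, ‖v₁‖ = 1 ∧ b = angle v₀ v₁}} := by
    refine ⟨π, ?_⟩
    rintro a ⟨v₀, -, -, rfl⟩
    exact (sInf_angle_mem_Icc v₀ V₁).2
  refine le_trans ?_ (le_csSup hbdd ⟨u, hu, hu1, rfl⟩)
  refine le_csInf ⟨_, e, e.2, he1, rfl⟩ ?_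
  rintro b ⟨v₁, hv₁, hv₁1, rfl⟩
  exact arccos_norm_starProjection_le_angle hu1 hv₁ hv₁1

lemma cos_subAngle_mul_norm_le (hrank : finrank ℝ V₀ ≤ finrank ℝ V₁) {v : Euc N}
    (hv : v ∈ V₀) : cos (subAngle V₀ V₁) * ‖v‖ ≤ ‖V₁.starProjection v‖ := by
  rcases eq_or_ne v 0 with rfl | hv0
  · simp
  have hV₁ : V₁ ≠ ⊥ := by
    rw [← Submodule.one_le_finrank_iff]
    exact (Submodule.one_le_finrank_iff.2 ((Submodule.ne_bot_iff V₀).2 ⟨v, hv, hv0⟩)).trans hrank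
  set u := ‖v‖⁻¹ • v with hu
  have hnorm : ‖v‖ ≠ 0 := norm_ne_zero_iff.2 hv0
  have hu1 : ‖u‖ = 1 := by rw [hu, norm_smul, norm_inv, norm_norm, inv_mul_cancel₀ hnorm]
  have hcos : cos (subAngle V₀ V₁) ≤ ‖V₁.starProjection u‖ := by
    have h := cos_le_cos_of_nonneg_of_le_pi (arccos_nonneg _) (subAngle_mem_Icc V₀ V₁).2
      (arccos_norm_starProjection_le_subAngle hV₁ (V₀.smul_mem _ hv) hu1)
    rwa [cos_arccos (by linarith [norm_nonneg (V₁.starProjection u)])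
      (hu1 ▸ V₁.norm_starProjection_apply_le u)] at h
  calc cos (subAngle V₀ V₁) * ‖v‖ ≤ ‖V₁.starProjection u‖ * ‖v‖ :=
        mul_le_mul_of_nonneg_right hcos (norm_nonneg v)
    _ = ‖V₁.starProjection v‖ := by
        rw [hu, map_smul, norm_smul, norm_inv, norm_norm, mul_right_comm, inv_mul_cancel₀ hnorm,
          one_mul]

lemma surjOn_starProjection (hrank : finrank ℝ V₀ = finrank ℝ V₁)
    (hθ : subAngle V₀ V₁ < π / 2) : SurjOn V₁.starProjection V₀ V₁ := by
  let L : V₀ →ₗ[ℝ] V₁ := V₁.orthogonalProjectionOnto.toLinearMap ∘ₗ V₀.subtype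
  have hL : Function.Injective L := by
    rw [← LinearMap.ker_eq_bot, Submodule.eq_bot_iff]
    intro x hx
    have hPx : V₁.starProjection x = 0 := congrArg Subtype.val (LinearMap.mem_ker.1 hx)
    have h := cos_subAngle_mul_norm_le hrank.le x.2
    rw [hPx, norm_zero] at h
    have hx0 : ‖(x : Euc N)‖ = 0 :=
      le_antisymm (nonpos_of_mul_nonpos_right h (cos_subAngle_pos hθ)) (norm_nonneg _)
    exact Subtype.ext (norm_eq_zero.1 hx0)
  intro w hw
  obtain ⟨x, hx⟩ := (LinearMap.injective_iff_surjective_of_finrank_eq_finrank hrank).1 hL ⟨w, hw⟩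
  exact ⟨x, x.2, congrArg Subtype.val hx⟩

end SubAngle

section Projection

variable {N : ℕ} {H : AffineSubspace ℝ (Euc N)}

lemma projA_eq (hne : (H : Set (Euc N)).Nonempty) (x : Euc N) :
    projA H x = hne.choose + H.direction.starProjection (x - hne.choose) := by
  rw [projA, dif_pos hne, Submodule.coe_orthogonalProjectionOnto_apply]

lemma projA_mem (hne : (H : Set (Euc N)).Nonempty) (x : Euc N) : projA H x ∈ H := by
  rw [projA_eq hne, add_comm]
  exact AffineSubspace.vadd_mem_of_mem_direction (Submodule.starProjection_apply_mem _ _)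
    hne.choose_spec

lemma projA_sub_projA (hne : (H : Set (Euc N)).Nonempty) (x y : Euc N) :
    projA H x - projA H y = H.direction.starProjection (x - y) := by
  rw [projA_eq hne, projA_eq hne, show x - y = (x - hne.choose) - (y - hne.choose) by abel]
  simp only [map_sub]
  abel

lemma projA_eq_self (hne : (H : Set (Euc N)).Nonempty) {y : Euc N} (hy : y ∈ H) :
    projA H y = y := by
  have hdir : y - hne.choose ∈ H.direction := AffineSubspace.vsub_mem_direction hy hne.choose_spec
  rw [projA_eq hne, Submodule.starProjection_eq_self_iff.2 hdir]
  abel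

lemma dist_projA_le (hne : (H : Set (Euc N)).Nonempty) {y : Euc N} (hy : y ∈ H) (x : Euc N) :
    dist (projA H x) y ≤ dist x y := by
  conv_lhs => rw [← projA_eq_self hne hy]
  rw [dist_eq_norm, dist_eq_norm, projA_sub_projA hne]
  exact H.direction.norm_starProjection_apply_le _

lemma cos_affAngle_mul_dist_le (hne : (H : Set (Euc N)).Nonempty) {A : AffineSubspace ℝ (Euc N)}
    (hrank : finrank ℝ A.direction ≤ finrank ℝ H.direction) {p z : Euc N} (hp : p ∈ A)
    (hz : z ∈ A) : cos (affAngle A H) * dist p z ≤ dist (projA H p) (projA H z) := by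
  rw [dist_eq_norm, dist_eq_norm, projA_sub_projA hne]
  exact cos_subAngle_mul_norm_le hrank (AffineSubspace.vsub_mem_direction hp hz)

lemma exists_mem_projA_eq (hne : (H : Set (Euc N)).Nonempty) {A : AffineSubspace ℝ (Euc N)}
    (hA : (A : Set (Euc N)).Nonempty)
    (hsurj : SurjOn H.direction.starProjection A.direction H.direction) (x : Euc N) :
    ∃ z ∈ A, projA H z = projA H x := by
  obtain ⟨p₀, hp₀⟩ := hA
  obtain ⟨v, hv, hPv⟩ :=
    hsurj (AffineSubspace.vsub_mem_direction (projA_mem hne x) (projA_mem hne p₀))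
  refine ⟨v + p₀, AffineSubspace.vadd_mem_of_mem_direction hv hp₀, ?_⟩
  have h := projA_sub_projA hne (v + p₀) p₀
  rw [add_sub_cancel_right, hPv, vsub_eq_sub] at h
  exact sub_left_inj.1 h

end Projection

lemma Nondegenerate.finrank_direction_affineSpan {N d : ℕ} {σ : Finset (Euc N)}
    (hσ : Nondegenerate σ) (hcard : σ.card = d + 1) :
    finrank ℝ (affineSpan ℝ (σ : Set (Euc N))).direction = d := by
  rw [direction_affineSpan, ← Subtype.range_coe (s := (σ : Set (Euc N)))]
  exact hσ.finrank_vectorSpan (by simpa using hcard)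

theorem seb_radius_under_projection (N d : ℕ) (σ : Finset (Euc N)) (hσ : Nondegenerate σ)
    (hcard : σ.card = d + 1) (H : AffineSubspace ℝ (Euc N))
    (hne : (H : Set (Euc N)).Nonempty) (hd : Module.finrank ℝ H.direction = d)
    (hang : affAngle (affineSpan ℝ (σ : Set (Euc N))) H < Real.pi / 2)
    (c : Euc N) (r : ℝ) (hr : IsSEB σ c r)
    (c' : Euc N) (r' : ℝ) (hr' : IsSEB (σ.image (projA H)) c' r') :
    r ≤ r' / Real.cos (affAngle (affineSpan ℝ (σ : Set (Euc N))) H) := by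
  set A := affineSpan ℝ (σ : Set (Euc N))
  have hrank : finrank ℝ A.direction = finrank ℝ H.direction := by
    rw [hd, hσ.finrank_direction_affineSpan hcard]
  have hA : (A : Set (Euc N)).Nonempty :=
    (affineSpan_nonempty ℝ).2 (Finset.card_pos.1 (by omega))
  obtain ⟨z, hzA, hz⟩ := exists_mem_projA_eq hne hA (surjOn_starProjection hrank hang) c'
  refine hr.2 z _ fun p hp ↦ (le_div_iff₀' (cos_subAngle_pos hang)).2 ?_
  calc cos (affAngle A H) * dist p z ≤ dist (projA H p) (projA H z) :=
        cos_affAngle_mul_dist_le hne hrank.le (subset_affineSpan ℝ _ hp) hzA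
    _ = dist (projA H c') (projA H p) := by rw [hz, dist_comm]
    _ ≤ dist c' (projA H p) := dist_projA_le hne (projA_mem hne p) c'
    _ = dist (projA H p) c' := dist_comm _ _
    _ ≤ r' := hr'.1 _ (Finset.mem_image_of_mem _ hp)
end
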